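/- Under the assumptions of the equivalence setup, every minimizer of J₀ over U is also a minimizer of J₁ over U, provided there exists at least one minimizer of J₁ that is valued in {-1,0,1} a.e. -/

import Mathlib

/-!
When `|u| ≤ 1`, the integral of `|u|` is at most the measure of the support of `u`, with equality
when `u` takes only the values `-1, 0, 1`. So `J₁ ≤ J₀` on `U`, with equality at a bang-off-bang
`J₁`-minimizer `u₁`, and for a `J₀`-minimizer `u₀` and any `v ∈ U`:
`J₁ u₀ ≤ J₀ u₀ ≤ J₀ u₁ = J₁ u₁ ≤ J₁ v`.
-/

open MeasureTheory Set

noncomputable def J0 (T : ℝ) (u : ℝ → ℝ) : ℝ :=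
  (volume {t ∈ Icc (0:ℝ) T | u t ≠ 0}).toReal

noncomputable def J1 (T : ℝ) (u : ℝ → ℝ) : ℝ :=
  ∫ t in Icc (0:ℝ) T, |u t|

section SupportMeasure

variable {α : Type*} [MeasurableSpace α] {μ : Measure α} {f : α → ℝ}

theorem integral_abs_le_measureReal_support [IsFiniteMeasure μ] (hf : Measurable f)
    (hb : ∀ᵐ x ∂μ, |f x| ≤ 1) :
    ∫ x, |f x| ∂μ ≤ μ.real (Function.support f) := by
  have hs := measurableSet_support hf
  rw [← integral_indicator_one hs]
  refine integral_mono_of_nonneg (ae_of_all _ fun x ↦ abs_nonneg (f x))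
    ((integrable_const 1).indicator hs) ?_
  filter_upwards [hb] with x hx
  by_cases h : f x = 0 <;> simp [h, hx]

theorem integral_abs_eq_measureReal_support (hf : Measurable f)
    (hv : ∀ᵐ x ∂μ, f x ∈ ({-1, 0, 1} : Set ℝ)) :
    ∫ x, |f x| ∂μ = μ.real (Function.support f) := by
  rw [← integral_indicator_one (measurableSet_support hf)]
  refine integral_congr_ae ?_
  filter_upwards [hv] with x hx
  simp only [mem_insert_iff, mem_singleton_iff] at hx
  rcases hx with h | h | h <;> simp [h]

end SupportMeasure

theorem J0_eq_measureReal_support (T : ℝ) (u : ℝ → ℝ) :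
    J0 T u = (volume.restrict (Icc (0:ℝ) T)).real (Function.support u) := by
  rw [J0, measureReal_def, Measure.restrict_apply' measurableSet_Icc, inter_comm]
  rfl

theorem J1_le_J0 (T : ℝ) {u : ℝ → ℝ} (hu : Measurable u)
    (hb : ∀ᵐ t ∂(volume.restrict (Icc (0:ℝ) T)), |u t| ≤ 1) :
    J1 T u ≤ J0 T u :=
  (J0_eq_measureReal_support T u).symm ▸ integral_abs_le_measureReal_support hu hb

theorem J1_eq_J0 (T : ℝ) {u : ℝ → ℝ} (hu : Measurable u)
    (hv : ∀ᵐ t ∂(volume.restrict (Icc (0:ℝ) T)), u t ∈ ({-1, 0, 1} : Set ℝ)) :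
    J1 T u = J0 T u :=
  (J0_eq_measureReal_support T u).symm ▸ integral_abs_eq_measureReal_support hu hv

theorem L0_min_subset_L1_min_general (T : ℝ) (U : Set (ℝ → ℝ))
    (hU : ∀ u ∈ U, Measurable u ∧ (∀ᵐ t ∂(volume.restrict (Icc (0:ℝ) T)), |u t| ≤ 1))
    (hex : ∃ u1 ∈ {u ∈ U | ∀ v ∈ U, J1 T u ≤ J1 T v},
      ∀ᵐ t ∂(volume.restrict (Icc (0:ℝ) T)), u1 t ∈ ({-1, 0, 1} : Set ℝ)) :
    {u ∈ U | ∀ v ∈ U, J0 T u ≤ J0 T v} ⊆ {u ∈ U | ∀ v ∈ U, J1 T u ≤ J1 T v} := by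
  obtain ⟨u1, ⟨hu1U, hu1min⟩, hu1val⟩ := hex
  rintro u0 ⟨hu0U, hu0min⟩
  refine ⟨hu0U, fun v hv ↦ ?_⟩
  calc J1 T u0 ≤ J0 T u0 := J1_le_J0 T (hU u0 hu0U).1 (hU u0 hu0U).2
    _ ≤ J0 T u1 := hu0min u1 hu1U
    _ = J1 T u1 := (J1_eq_J0 T (hU u1 hu1U).1 hu1val).symm
    _ ≤ J1 T v := hu1min v hv

theorem L0_min_subset_L1_min (T : ℝ) (hT : 0 < T) (U : Set (ℝ → ℝ))
    (hU : ∀ u ∈ U, Measurable u ∧ (∀ᵐ t ∂(volume.restrict (Icc (0:ℝ) T)), |u t| ≤ 1))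
    (hex : ∃ u1 ∈ {u ∈ U | ∀ v ∈ U, J1 T u ≤ J1 T v},
      ∀ᵐ t ∂(volume.restrict (Icc (0:ℝ) T)), u1 t ∈ ({-1, 0, 1} : Set ℝ)) :
    {u ∈ U | ∀ v ∈ U, J0 T u ≤ J0 T v} ⊆ {u ∈ U | ∀ v ∈ U, J1 T u ≤ J1 T v} :=
  L0_min_subset_L1_min_general T U hU hex
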